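/- Let C be a category and S(C) the cofree site category (objects: pairs (c,F) of an object with a filter of sieves; morphisms: u : (c,F) ⟶ (c',F') with u*R ∈ F for all R ∈ F'). A section J : C ⥤ S(C) of the projection π : S(C) ⥤ C (i.e., π ∘ J = id_C) is precisely the same data as a Grothendieck coverage on C: an assignment of an upward-closed set J(c) of sieves on c containing the maximal sieve, stable under pullback sieves along all morphisms. -/

import Mathlib

open CategoryTheory

/-- Objects of the cofree site `S(C)`: an object of `C` together with a filter of
sieves on it (upward-closed, containing the maximal sieve). -/
structure CofreeSiteObj (C : Type*) [Category C] where
  pt : C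
  filt : Set (Sieve pt)
  top_mem : (⊤ : Sieve pt) ∈ filt
  up_closed : ∀ {S T : Sieve pt}, S ∈ filt → S ≤ T → T ∈ filt

/-- The cofree site category: morphisms `(c,F) ⟶ (c',F')` are morphisms
`u : c ⟶ c'` such that `u*R ∈ F` for every `R ∈ F'`. -/
instance cofreeSiteCategory (C : Type*) [Category C] : Category (CofreeSiteObj C) where
  Hom A B := { u : A.pt ⟶ B.pt // ∀ R ∈ B.filt, Sieve.pullback u R ∈ A.filt }
  id A := ⟨𝟙 A.pt, fun R hR => by simpa using hR⟩
  comp {A B E} u v := ⟨u.1 ≫ v.1, fun R hR => by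
    rw [Sieve.pullback_comp]; exact u.2 _ (v.2 R hR)⟩
  id_comp u := by apply Subtype.ext; simp
  comp_id u := by apply Subtype.ext; simp
  assoc u v w := by apply Subtype.ext; simp

/-- The projection from the cofree site to the base category. -/
def cofreeSiteProj (C : Type*) [Category C] : CofreeSiteObj C ⥤ C where
  obj A := A.pt
  map u := u.1

/-!
A section `F` of `π` only satisfies `(F c).pt = c` propositionally, so its filter on `(F c).pt`
is first transported to a filter on `c` by pulling back along `eqToHom`. Transported along the
same identifications, `F u` becomes a morphism of `S(C)` with underlying arrow `u`, and its
defining property is exactly pullback stability of the transported filters. Conversely a coverage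
`J` gives the strict section `c ↦ (c, J c)`, and transporting back recovers `F` on the nose.
-/

namespace CofreeSiteObj

variable {C : Type*} [Category C]

abbrev transport (A : CofreeSiteObj C) {c : C} (e : A.pt = c) : CofreeSiteObj C where
  pt := c
  filt := {S | S.pullback (eqToHom e) ∈ A.filt}
  top_mem := by simpa using A.top_mem
  up_closed hS hle := A.up_closed hS (Sieve.pullback_monotone _ hle)

theorem transport_eq (A : CofreeSiteObj C) {c : C} (e : A.pt = c) : A.transport e = A := by
  subst e
  cases A
  simp [transport]

@[simp]
theorem comp_val {A B E : CofreeSiteObj C} (u : A ⟶ B) (v : B ⟶ E) :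
    (u ≫ v).1 = u.1 ≫ v.1 :=
  rfl

@[simp]
theorem eqToHom_val {A B : CofreeSiteObj C} (p : A = B) :
    (eqToHom p).1 = eqToHom (congrArg pt p) := by
  subst p
  rfl

end CofreeSiteObj

abbrev CofreeSiteSection (C : Type*) [Category C] :=
  { F : C ⥤ CofreeSiteObj C // F ⋙ cofreeSiteProj C = 𝟭 C }

abbrev GrothendieckCoverage (C : Type*) [Category C] :=
  { J : ∀ c : C, Set (Sieve c) //
    (∀ c : C, (⊤ : Sieve c) ∈ J c) ∧
    (∀ (c : C) (S T : Sieve c), S ∈ J c → S ≤ T → T ∈ J c) ∧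
    (∀ {c c' : C} (u : c ⟶ c'), ∀ R ∈ J c', Sieve.pullback u R ∈ J c) }

namespace CofreeSiteSection

variable {C : Type*} [Category C]

theorem pt_obj (F : CofreeSiteSection C) (c : C) : (F.1.obj c).pt = c :=
  Functor.congr_obj F.2 c

abbrev strictObj (F : CofreeSiteSection C) (c : C) : CofreeSiteObj C :=
  (F.1.obj c).transport (F.pt_obj c)

theorem strictObj_eq (F : CofreeSiteSection C) (c : C) : F.strictObj c = F.1.obj c :=
  CofreeSiteObj.transport_eq _ _

def strictMap (F : CofreeSiteSection C) {c c' : C} (u : c ⟶ c') :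
    F.strictObj c ⟶ F.strictObj c' :=
  eqToHom (F.strictObj_eq c) ≫ F.1.map u ≫ eqToHom (F.strictObj_eq c').symm

theorem strictMap_val (F : CofreeSiteSection C) {c c' : C} (u : c ⟶ c') :
    (F.strictMap u).1 = u := by
  have h : (F.1.map u).1 = eqToHom (F.pt_obj c) ≫ u ≫ eqToHom (F.pt_obj c').symm :=
    Functor.congr_hom F.2 u
  simp [strictMap, h]

def toCoverage (F : CofreeSiteSection C) : GrothendieckCoverage C :=
  ⟨fun c => (F.strictObj c).filt, fun c => (F.strictObj c).top_mem,
    fun c _ _ hS hle => (F.strictObj c).up_closed hS hle,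
    fun u R hR => F.strictMap_val u ▸ (F.strictMap u).2 R hR⟩

def ofCoverage (J : GrothendieckCoverage C) : CofreeSiteSection C :=
  ⟨{ obj c := ⟨c, J.1 c, J.2.1 c, fun hS hle => J.2.2.1 c _ _ hS hle⟩
     map u := ⟨u, J.2.2.2 u⟩ }, rfl⟩

theorem ofCoverage_toCoverage (F : CofreeSiteSection C) : ofCoverage F.toCoverage = F :=
  Subtype.ext <| CategoryTheory.Functor.ext F.strictObj_eq fun _ _ u =>
    Subtype.ext (F.strictMap_val u).symm

theorem toCoverage_ofCoverage (J : GrothendieckCoverage C) : (ofCoverage J).toCoverage = J :=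
  Subtype.ext <| funext fun c => Set.ext fun S =>
    show S.pullback (𝟙 c) ∈ J.1 c ↔ S ∈ J.1 c by rw [Sieve.pullback_id]

def equivCoverage : CofreeSiteSection C ≃ GrothendieckCoverage C where
  toFun := toCoverage
  invFun := ofCoverage
  left_inv := ofCoverage_toCoverage
  right_inv := toCoverage_ofCoverage

end CofreeSiteSection

/-- Sections of the projection `π : S(C) ⥤ C` are precisely the same data as
Grothendieck coverages on `C`. -/
theorem stmt_18 {C : Type*} [Category C] :
    Nonempty
      ({ F : C ⥤ CofreeSiteObj C // F ⋙ cofreeSiteProj C = 𝟭 C } ≃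
       { J : ∀ c : C, Set (Sieve c) //
          (∀ c : C, (⊤ : Sieve c) ∈ J c) ∧
          (∀ (c : C) (S T : Sieve c), S ∈ J c → S ≤ T → T ∈ J c) ∧
          (∀ {c c' : C} (u : c ⟶ c'), ∀ R ∈ J c', Sieve.pullback u R ∈ J c) }) :=
  ⟨CofreeSiteSection.equivCoverage⟩
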